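/- For all integers m ≥ n ≥ 1, the chromatic symmetric function of P_{m,n} satisfies X_{P_{m,n}} = X_{P_{m+1}} + e_1 · X_{P_m} − X_{P_n} · X_{P_{m−n+1}}. -/

import Mathlib

open scoped BigOperators

/-- The chromatic symmetric function `X_G` of a finite simple graph `G`, as a formal
power series in countably many commuting variables `x_0, x_1, x_2, …` (the colors are
the natural numbers): the coefficient of the monomial `∏ i, x_i ^ (d i)` is the number
of proper colorings `κ : V → ℕ` whose color fibers have the sizes prescribed by `d`. -/
noncomputable def csf {V : Type} [Fintype V] (G : SimpleGraph V) : MvPowerSeries ℕ ℚ :=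
  fun d => (Nat.card {κ : V → ℕ // (∀ a b : V, G.Adj a b → κ a ≠ κ b) ∧
      ∀ i : ℕ, Nat.card {v : V // κ v = i} = d i} : ℚ)

/- The elementary symmetric function `e_k`, as a formal power series:
the sum of all squarefree monomials of total degree `k`. -/
open Classical in
noncomputable def esym (k : ℕ) : MvPowerSeries ℕ ℚ :=
  fun d => if (∀ i, d i ≤ 1) ∧ (d.sum fun _ e => e) = k then 1 else 0

/-- The path `P_n` on the `n` vertices `0, 1, …, n-1`, with edges `{i, i+1}`. -/
def path (n : ℕ) : SimpleGraph (Fin n) :=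
  SimpleGraph.fromRel (fun i j => (i : ℕ) + 1 = (j : ℕ))

/-- The graph `P_{m,n}` (for `1 ≤ n ≤ m`): the path `P_m` on the vertices
`0, …, m-1` together with an extra vertex `m` (the paper's `v_{m+1}`) attached as a
leaf to the vertex `n - 1` (the paper's `v_n`, the `n`-th vertex of the path). -/
def pathLeaf (m n : ℕ) : SimpleGraph (Fin (m + 1)) :=
  SimpleGraph.fromRel (fun i j =>
    ((i : ℕ) + 1 = (j : ℕ) ∧ (j : ℕ) < m) ∨ ((i : ℕ) = n - 1 ∧ (j : ℕ) = m))

/-! Deleting the edge `v_n v_{m+1}` from `P_{m,n}` leaves `P_m ⊔ K_1`, and deleting the edge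
`v_n v_{n+1}` from `P_{m+1}` leaves `P_n ⊔ P_{m-n+1}`; since `X` is multiplicative on disjoint
unions, their chromatic symmetric functions are `e_1 X_{P_m}` and `X_{P_n} X_{P_{m-n+1}}`.
For a non-edge `uv`, the proper colorings of `G` split into those of `G + uv` and those giving
`u` and `v` the same color. For the two deletions above these same-color colorings correspond
under the rotation `(v_{n+1} v_{n+2} ⋯ v_{m+1})`, so the two corrections cancel. -/

open SimpleGraph MvPowerSeries

section ChromaticSymmetricFunction

variable {V W : Type}

lemma ncard_preimage_comp_equiv (e : V ≃ W) (s : Set (V → ℕ)) :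
    ((· ∘ e) ⁻¹' s).ncard = s.ncard :=
  Set.ncard_preimage_of_injective_subset_range e.surjective.injective_comp_right
    fun κ _ => ⟨κ ∘ e.symm, by simp [Function.comp_assoc]⟩

def IsProperColoring (G : SimpleGraph V) (κ : V → ℕ) : Prop := ∀ a b, G.Adj a b → κ a ≠ κ b

lemma isProperColoring_fromRel_iff {r : V → V → Prop} (hr : ∀ a b, r a b → a ≠ b)
    (κ : V → ℕ) : IsProperColoring (fromRel r) κ ↔ ∀ a b, r a b → κ a ≠ κ b := by
  refine ⟨fun h a b hab => h a b ⟨hr a b hab, .inl hab⟩, ?_⟩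
  rintro h a b ⟨-, hab | hba⟩
  exacts [h a b hab, (h b a hba).symm]

lemma isProperColoring_comp_iso {G : SimpleGraph V} {H : SimpleGraph W} (e : G ≃g H)
    (κ : W → ℕ) : IsProperColoring G (κ ∘ e) ↔ IsProperColoring H κ := by
  refine ⟨fun h a b hab => ?_, fun h a b hab => h _ _ (e.map_adj_iff.mpr hab)⟩
  simpa using h (e.symm a) (e.symm b) (e.symm.map_adj_iff.mpr hab)

lemma isProperColoring_sup_edge_iff {G : SimpleGraph V} {u v : V} (huv : u ≠ v) (κ : V → ℕ) :
    IsProperColoring (G ⊔ edge u v) κ ↔ IsProperColoring G κ ∧ κ u ≠ κ v := by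
  simp only [IsProperColoring, sup_adj, edge_adj]
  refine ⟨fun h => ⟨fun a b hab => h a b (.inl hab), h u v (.inr ⟨.inl ⟨rfl, rfl⟩, huv⟩)⟩, ?_⟩
  rintro ⟨hG, huv⟩ a b (hab | ⟨⟨rfl, rfl⟩ | ⟨rfl, rfl⟩, -⟩)
  exacts [hG a b hab, huv, huv.symm]

lemma isProperColoring_sum_iff {G : SimpleGraph V} {H : SimpleGraph W} (κ : V ⊕ W → ℕ) :
    IsProperColoring (G ⊕g H) κ ↔
      IsProperColoring G (κ ∘ Sum.inl) ∧ IsProperColoring H (κ ∘ Sum.inr) := by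
  refine ⟨fun h => ⟨fun a b hab => h _ _ hab, fun a b hab => h _ _ hab⟩, ?_⟩
  rintro ⟨hG, hH⟩ (a | a) (b | b) hab
  exacts [hG a b hab, (not_adj_sum_inl_inr a b hab).elim,
    (not_adj_sum_inl_inr b a hab.symm).elim, hH a b hab]

variable [Fintype V] [Fintype W]

noncomputable def colorType (κ : V → ℕ) : ℕ →₀ ℕ := ∑ v, Finsupp.single (κ v) 1

lemma colorType_apply (κ : V → ℕ) (i : ℕ) : colorType κ i = Nat.card {v // κ v = i} := by
  simp [colorType, Finsupp.finsetSum_apply, Finsupp.single_apply, Fintype.card_subtype]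

lemma colorType_comp_equiv (e : V ≃ W) (κ : W → ℕ) : colorType (κ ∘ e) = colorType κ :=
  e.sum_comp fun w => Finsupp.single (κ w) 1

lemma colorType_sum (κ : V ⊕ W → ℕ) :
    colorType κ = colorType (κ ∘ Sum.inl) + colorType (κ ∘ Sum.inr) :=
  Fintype.sum_sum_type _

lemma mem_support_colorType (κ : V → ℕ) (v : V) : κ v ∈ (colorType κ).support := by
  rw [Finsupp.mem_support_iff, colorType_apply, ← Nat.pos_iff_ne_zero, Nat.card_pos_iff]
  exact ⟨⟨⟨v, rfl⟩⟩, inferInstance⟩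

def coloringsOfType (G : SimpleGraph V) (d : ℕ →₀ ℕ) : Set (V → ℕ) :=
  {κ | IsProperColoring G κ ∧ colorType κ = d}

lemma coloringsOfType_finite (G : SimpleGraph V) (d : ℕ →₀ ℕ) :
    (coloringsOfType G d).Finite := by
  refine (Set.Finite.pi' fun _ => d.support.finite_toSet).subset ?_
  rintro κ ⟨-, rfl⟩ v
  exact mem_support_colorType κ v

instance (G : SimpleGraph V) (d : ℕ →₀ ℕ) : Finite (coloringsOfType G d) :=
  (coloringsOfType_finite G d).to_subtype

lemma coeff_csf (G : SimpleGraph V) (d : ℕ →₀ ℕ) :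
    coeff d (csf G) = (coloringsOfType G d).ncard := by
  rw [coeff_apply, csf, ← Nat.card_coe_set_eq]
  exact congrArg _ <| Nat.card_congr <| Equiv.subtypeEquivRight fun κ => by
    simp only [coloringsOfType, IsProperColoring, Set.mem_ofPred_eq, Finsupp.ext_iff,
      colorType_apply]

theorem csf_eq_of_iso {G : SimpleGraph V} {H : SimpleGraph W} (e : G ≃g H) : csf G = csf H := by
  ext d
  rw [coeff_csf, coeff_csf, ← ncard_preimage_comp_equiv e.toEquiv]
  congr 2
  ext κ
  simp only [coloringsOfType, Set.mem_preimage, Set.mem_ofPred_eq, colorType_comp_equiv]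
  exact and_congr_left' (isProperColoring_comp_iso e κ)

open Finset in
noncomputable def coloringsOfTypeSumEquiv (G : SimpleGraph V) (H : SimpleGraph W)
    (d : ℕ →₀ ℕ) : coloringsOfType (G ⊕g H) d ≃
      Σ p : antidiagonal d, coloringsOfType G p.1.1 × coloringsOfType H p.1.2 where
  toFun κ :=
    ⟨⟨(colorType (κ.1 ∘ Sum.inl), colorType (κ.1 ∘ Sum.inr)),
        mem_antidiagonal.2 (by rw [← colorType_sum, κ.2.2])⟩,
      ⟨κ.1 ∘ Sum.inl, ((isProperColoring_sum_iff κ.1).1 κ.2.1).1, rfl⟩,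
      ⟨κ.1 ∘ Sum.inr, ((isProperColoring_sum_iff κ.1).1 κ.2.1).2, rfl⟩⟩
  invFun x :=
    ⟨Sum.elim x.2.1 x.2.2, (isProperColoring_sum_iff _).2 ⟨x.2.1.2.1, x.2.2.2.1⟩, by
      rw [colorType_sum, Sum.elim_comp_inl, Sum.elim_comp_inr, x.2.1.2.2, x.2.2.2.2]
      exact mem_antidiagonal.1 x.1.2⟩
  left_inv κ := Subtype.ext (Sum.elim_comp_inl_inr κ.1)
  right_inv := by
    rintro ⟨⟨⟨p₁, p₂⟩, hp⟩, ⟨κ₁, h₁, hκ₁⟩, ⟨κ₂, h₂, hκ₂⟩⟩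
    dsimp only at hκ₁ hκ₂
    subst hκ₁ hκ₂
    rfl

theorem csf_sum (G : SimpleGraph V) (H : SimpleGraph W) :
    csf (G ⊕g H) = csf G * csf H := by
  ext d
  rw [coeff_mul, coeff_csf, ← Nat.card_coe_set_eq,
    Nat.card_congr (coloringsOfTypeSumEquiv G H d), Nat.card_sigma, Nat.cast_sum,
    ← Finset.sum_coe_sort (Finset.HasAntidiagonal.antidiagonal d)]
  refine Finset.sum_congr rfl fun p _ => ?_
  rw [Nat.card_prod, Nat.cast_mul, coeff_csf, coeff_csf, Nat.card_coe_set_eq,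
    Nat.card_coe_set_eq]

lemma coloringsOfType_bot_fin_one (d : ℕ →₀ ℕ) :
    coloringsOfType (⊥ : SimpleGraph (Fin 1)) d =
      (fun c _ => c) '' {c | Finsupp.single c 1 = d} := by
  ext κ
  simp [coloringsOfType, IsProperColoring, colorType, funext_iff, Fin.forall_fin_one, eq_comm]

theorem esym_one_eq_csf_bot : esym 1 = csf (⊥ : SimpleGraph (Fin 1)) := by
  ext d
  rw [coeff_csf, coloringsOfType_bot_fin_one,
    Set.ncard_image_of_injective _ fun c c' h => congrFun h 0, coeff_apply, esym]
  by_cases h : ∃ c, d = Finsupp.single c 1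
  · obtain ⟨c, rfl⟩ := h
    have hc : {c' | Finsupp.single c' 1 = Finsupp.single c 1} = {c} := by
      ext c'; simp [Finsupp.single_left_inj one_ne_zero]
    rw [if_pos ⟨fun i => by rw [Finsupp.single_apply]; split_ifs <;> omega,
      (Finsupp.sum_eq_one_iff _).2 ⟨c, rfl⟩⟩, hc, Set.ncard_singleton, Nat.cast_one]
  · rw [if_neg fun h' => h ((Finsupp.sum_eq_one_iff _).1 h'.2)]
    have : {c | Finsupp.single c 1 = d} = ∅ := by
      ext c; simpa using fun h' => h ⟨c, h'.symm⟩
    rw [this, Set.ncard_empty, Nat.cast_zero]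

noncomputable def csfSameColor (G : SimpleGraph V) (u v : V) : MvPowerSeries ℕ ℚ :=
  fun d => (coloringsOfType G d ∩ {κ | κ u = κ v}).ncard

lemma coeff_csfSameColor (G : SimpleGraph V) (u v : V) (d : ℕ →₀ ℕ) :
    coeff d (csfSameColor G u v) = (coloringsOfType G d ∩ {κ | κ u = κ v}).ncard :=
  rfl

theorem csf_eq_csf_sup_edge_add (G : SimpleGraph V) {u v : V} (huv : u ≠ v) :
    csf G = csf (G ⊔ edge u v) + csfSameColor G u v := by
  ext d
  have hdiff : coloringsOfType (G ⊔ edge u v) d = coloringsOfType G d \ {κ | κ u = κ v} := by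
    ext κ
    simp only [coloringsOfType, isProperColoring_sup_edge_iff huv, Set.mem_sdiff,
      Set.mem_ofPred_eq]
    tauto
  rw [map_add, coeff_csf, coeff_csf, coeff_csfSameColor, hdiff, add_comm, ← Nat.cast_add,
    Set.ncard_inter_add_ncard_sdiff_eq_ncard _ _ (coloringsOfType_finite G d)]

theorem csfSameColor_congr {G : SimpleGraph V} {H : SimpleGraph W} (e : V ≃ W) {u v : V}
    {u' v' : W} (hu : e u = u') (hv : e v = v')
    (h : ∀ κ : W → ℕ, κ u' = κ v' → (IsProperColoring G (κ ∘ e) ↔ IsProperColoring H κ)) :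
    csfSameColor G u v = csfSameColor H u' v' := by
  subst hu hv
  ext d
  rw [coeff_csfSameColor, coeff_csfSameColor, ← ncard_preimage_comp_equiv e]
  congr 2
  ext κ
  simp only [coloringsOfType, Set.mem_preimage, Set.mem_inter_iff, Set.mem_ofPred_eq,
    colorType_comp_equiv, Function.comp_apply]
  constructor
  · rintro ⟨⟨hp, ht⟩, huv⟩; exact ⟨⟨(h κ huv).mp hp, ht⟩, huv⟩
  · rintro ⟨⟨hp, ht⟩, huv⟩; exact ⟨⟨(h κ huv).mpr hp, ht⟩, huv⟩

end ChromaticSymmetricFunction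

section PathGraphs

variable {m n : ℕ}

variable (m n) in
def pathSplit : SimpleGraph (Fin (m + 1)) :=
  fromRel fun i j => (i : ℕ) + 1 = j ∧ (j : ℕ) ≠ n

variable (m) in
def pathAddVertex : SimpleGraph (Fin (m + 1)) :=
  fromRel fun i j => (i : ℕ) + 1 = j ∧ (j : ℕ) < m

lemma path_eq_pathSplit_sup_edge (hn : 1 ≤ n) (hnm : n ≤ m) :
    path (m + 1) = pathSplit m n ⊔ edge ⟨n - 1, by omega⟩ ⟨n, by omega⟩ := by
  ext a b
  simp only [path, pathSplit, fromRel_adj, sup_adj, edge_adj, ne_eq, Fin.ext_iff]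
  omega

lemma pathLeaf_eq_pathAddVertex_sup_edge (hnm : n ≤ m) :
    pathLeaf m n = pathAddVertex m ⊔ edge ⟨n - 1, by omega⟩ (Fin.last m) := by
  ext a b
  simp only [pathLeaf, pathAddVertex, fromRel_adj, sup_adj, edge_adj, ne_eq, Fin.ext_iff,
    Fin.val_last]
  omega

lemma csf_pathSplit (hnm : n ≤ m) :
    csf (pathSplit m n) = csf (path n) * csf (path (m - n + 1)) := by
  rw [← csf_sum]
  refine (csf_eq_of_iso ⟨finSumFinEquiv.trans (finCongr (by omega)), ?_⟩).symm
  rintro (a | a) (b | b) <;>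
    simp only [path, pathSplit, fromRel_adj, sum_adj, Equiv.trans_apply, finCongr_apply,
      Fin.val_cast, finSumFinEquiv_apply_left, finSumFinEquiv_apply_right, Fin.val_castAdd,
      Fin.val_natAdd, ne_eq, Fin.ext_iff] <;>
    grind

lemma csf_pathAddVertex : csf (pathAddVertex m) = esym 1 * csf (path m) := by
  rw [esym_one_eq_csf_bot, mul_comm, ← csf_sum]
  refine (csf_eq_of_iso ⟨finSumFinEquiv, ?_⟩).symm
  rintro (a | a) (b | b) <;>
    simp only [path, pathAddVertex, fromRel_adj, sum_adj, bot_adj, finSumFinEquiv_apply_left,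
      finSumFinEquiv_apply_right, Fin.val_castAdd, Fin.val_natAdd, ne_eq, Fin.ext_iff] <;>
    grind

lemma val_cycleIcc_last (hnm : n ≤ m) (k : Fin (m + 1)) :
    (Fin.cycleIcc ⟨n, by omega⟩ (Fin.last m) k : ℕ) =
      if (k : ℕ) < n then (k : ℕ) else if (k : ℕ) = m then n else k + 1 := by
  rcases lt_or_ge (k : ℕ) n with hk | hk
  · rw [Fin.cycleIcc_of_lt (Fin.mk_lt_of_lt_val hk), if_pos hk]
  rw [if_neg (by omega)]
  rcases eq_or_ne k (Fin.last m) with rfl | hkm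
  · rw [Fin.cycleIcc_of_last (Fin.le_last _), Fin.val_last, if_pos rfl]
  · have hkm' : (k : ℕ) < m := Fin.val_lt_last hkm
    rw [Fin.cycleIcc_of_ge_of_lt (Fin.le_def.2 hk) (Fin.lt_last_iff_ne_last.2 hkm),
      if_neg (by omega), Fin.val_add_one_of_lt (Fin.lt_last_iff_ne_last.2 hkm)]

/-- The rotation `σ = (n n+1 ⋯ m)` carries `pathAddVertex m` to the path through
`0, …, n-1, n+1, …, m` plus the isolated vertex `n`. That graph differs from `pathSplit m n`
only in joining `n + 1` to `n - 1` instead of `n`, which colorings with `κ (n-1) = κ n` cannot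
tell apart. -/
lemma isProperColoring_pathAddVertex_comp_cycleIcc (hn : 1 ≤ n) (hnm : n ≤ m)
    (κ : Fin (m + 1) → ℕ) (hκ : κ ⟨n - 1, by omega⟩ = κ ⟨n, by omega⟩) :
    IsProperColoring (pathAddVertex m) (κ ∘ Fin.cycleIcc ⟨n, by omega⟩ (Fin.last m)) ↔
      IsProperColoring (pathSplit m n) κ := by
  set σ := Fin.cycleIcc (⟨n, by omega⟩ : Fin (m + 1)) (Fin.last m)
  have hσ : ∀ k, (σ k : ℕ) = if (k : ℕ) < n then (k : ℕ) else if (k : ℕ) = m then n else k + 1 :=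
    val_cycleIcc_last hnm
  have hσ_pred : σ ⟨n - 1, by omega⟩ = ⟨n - 1, by omega⟩ :=
    Fin.ext (by rw [hσ, if_pos (by simp only; omega)])
  rw [pathAddVertex, pathSplit,
    isProperColoring_fromRel_iff (fun a b h => Fin.ne_of_val_ne (by omega)),
    isProperColoring_fromRel_iff (fun a b h => Fin.ne_of_val_ne (by omega))]
  constructor
  · rintro h a b ⟨hab, hbn⟩
    by_cases han : (a : ℕ) = n
    · have h' := h ⟨n - 1, by omega⟩ ⟨n, by omega⟩ ⟨by simp only; omega, by simp only; omega⟩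
      rw [Function.comp_apply, Function.comp_apply, hσ_pred, hκ] at h'
      convert h' using 2 <;> refine Fin.ext ?_
      · exact han
      · rw [hσ]; simp only; split_ifs <;> omega
    · obtain ⟨a, rfl⟩ := σ.surjective a
      obtain ⟨b, rfl⟩ := σ.surjective b
      rw [hσ, hσ] at hab
      rw [hσ] at hbn han
      exact h a b ⟨by split_ifs at * <;> omega, by split_ifs at * <;> omega⟩
  · rintro h a b ⟨hab, hbm⟩
    by_cases hbn : (b : ℕ) = n
    · have h' := h ⟨n, by omega⟩ (σ b) ⟨by rw [hσ]; simp only; split_ifs <;> omega,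
        by rw [hσ]; split_ifs <;> omega⟩
      rwa [Function.comp_apply, Function.comp_apply,
        show σ a = ⟨n - 1, by omega⟩ from Fin.ext (by rw [hσ]; simp only; split_ifs <;> omega),
        hκ]
    · exact h (σ a) (σ b) ⟨by rw [hσ, hσ]; split_ifs <;> omega, by rw [hσ]; split_ifs <;> omega⟩

lemma csfSameColor_pathAddVertex (hn : 1 ≤ n) (hnm : n ≤ m) :
    csfSameColor (pathAddVertex m) ⟨n - 1, by omega⟩ (Fin.last m) =
      csfSameColor (pathSplit m n) ⟨n - 1, by omega⟩ ⟨n, by omega⟩ :=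
  csfSameColor_congr (Fin.cycleIcc ⟨n, by omega⟩ (Fin.last m))
    (Fin.cycleIcc_of_lt (Fin.mk_lt_mk.2 (by omega))) (Fin.cycleIcc_of_last (Fin.le_last _))
    (isProperColoring_pathAddVertex_comp_cycleIcc hn hnm)

end PathGraphs

/-- For all `m ≥ n ≥ 1`,
`X_{P_{m,n}} = X_{P_{m+1}} + e_1 · X_{P_m} − X_{P_n} · X_{P_{m−n+1}}`. -/
theorem csf_pathLeaf_eq (m n : ℕ) (hn : 1 ≤ n) (hnm : n ≤ m) :
    csf (pathLeaf m n) =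
      csf (path (m + 1)) + esym 1 * csf (path m) - csf (path n) * csf (path (m - n + 1)) := by
  have hsplit := csf_eq_csf_sup_edge_add (pathSplit m n) (u := ⟨n - 1, by omega⟩)
    (v := ⟨n, by omega⟩) (Fin.ne_of_val_ne (by simp only; omega))
  have hadd := csf_eq_csf_sup_edge_add (pathAddVertex m) (u := ⟨n - 1, by omega⟩)
    (v := Fin.last m) (Fin.ne_of_val_ne (by simp only [Fin.val_last]; omega))
  rw [← path_eq_pathSplit_sup_edge hn hnm, csf_pathSplit hnm] at hsplit
  rw [← pathLeaf_eq_pathAddVertex_sup_edge hnm, csf_pathAddVertex,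
    csfSameColor_pathAddVertex hn hnm] at hadd
  rw [hsplit, hadd]
  ring
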